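/- arXiv:1710.02317 — 4 statements merged into one kernel-verified Lean document; each statement's English description precedes it below -/
import Mathlib

section
/- Let G be a directed graph and let G' be obtained from G by replacing every node v by two nodes Head(v) and Tail(v), adding an edge from Head(v) to Tail(v), redirecting all edges incoming to v so that they enter Head(v), and all edges leaving v so that they leave Tail(v). Then for nodes s, t of G and k ∈ ℕ, there exists a simple path (no repeated nodes) of length k from s to t in G if and only if there exists a trail (no repeated edges) of length 2k + 1 from Head(s) to Tail(t) in G'. -/
/-!
A path `v₀ ⋯ v_k` of `G` corresponds to the walk
`Head v₀, Tail v₀, Head v₁, Tail v₁, …, Head v_k, Tail v_k` of `G'`. Conversely, edges of `G'`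
alternate between `Head v → Tail v` and `Tail u → Head v`, so every walk of `G'` of odd length
starting at a head node is of this form. Among the edges of such a walk, the edges `Head vᵢ → Tail vᵢ`
are pairwise distinct exactly when the nodes `vᵢ` are; and if the `vᵢ` are distinct then so are all
nodes of the walk, hence all its edges.
-/

/-- Edge relation of the split graph `G'`: each node `v` becomes `Head v = Sum.inl v`
and `Tail v = Sum.inr v`; there is an edge `Head v → Tail v`, and every edge
`(u,v)` of `G` becomes an edge `Tail u → Head v`. -/
def SplitEdge {V : Type*} (E : V → V → Prop) : V ⊕ V → V ⊕ V → Prop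
  | Sum.inl v, Sum.inr w => v = w
  | Sum.inr u, Sum.inl v => E u v
  | _, _ => False

section SplitPath

variable {V : Type*}

def splitPath : List V → List (V ⊕ V)
  | [] => []
  | v :: p => Sum.inl v :: Sum.inr v :: splitPath p

@[simp]
lemma splitPath_nil : splitPath ([] : List V) = [] := rfl

@[simp]
lemma splitPath_cons (v : V) (p : List V) :
    splitPath (v :: p) = Sum.inl v :: Sum.inr v :: splitPath p := rfl

@[simp]
lemma length_splitPath (p : List V) : (splitPath p).length = 2 * p.length := by
  induction p with
  | nil => rfl
  | cons v p ih => simp only [splitPath_cons, List.length_cons, ih]; ring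

lemma head?_splitPath (p : List V) : (splitPath p).head? = p.head?.map Sum.inl := by
  cases p <;> rfl

lemma getLast?_splitPath (p : List V) : (splitPath p).getLast? = p.getLast?.map Sum.inr := by
  induction p with
  | nil => rfl
  | cons v p ih => simp [List.getLast?_cons, ih, Option.getD_map]

@[simp]
lemma mem_splitPath (x : V ⊕ V) (p : List V) : x ∈ splitPath p ↔ x.elim (· ∈ p) (· ∈ p) := by
  induction p with
  | nil => cases x <;> simp
  | cons v p ih => cases x <;> simp_all [eq_comm]

lemma nodup_splitPath {p : List V} (h : p.Nodup) : (splitPath p).Nodup := by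
  induction p with
  | nil => exact List.nodup_nil
  | cons v p ih =>
    rw [List.nodup_cons] at h
    simp [h.1, ih h.2]

lemma isChain_splitPath_iff (E : V → V → Prop) (p : List V) :
    (splitPath p).IsChain (SplitEdge E) ↔ p.IsChain E := by
  induction p with
  | nil => simp
  | cons v p ih =>
    cases p with
    | nil => simp [SplitEdge]
    | cons w p =>
      rw [splitPath_cons, splitPath_cons, List.isChain_cons_cons, List.isChain_cons_cons,
        ← splitPath_cons, ih, List.isChain_cons_cons]
      simp [SplitEdge]

lemma exists_eq_splitPath (E : V → V → Prop) :
    ∀ {q : List (V ⊕ V)}, q.IsChain (SplitEdge E) → (∀ x ∈ q.head?, x.isLeft) →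
      Even q.length → ∃ p, q = splitPath p
  | [], _, _, _ => ⟨[], rfl⟩
  | [_], _, _, hlen => absurd hlen (by simp)
  | Sum.inr _ :: _, _, hhead, _ => absurd (hhead _ rfl) (by simp)
  | Sum.inl _ :: Sum.inl _ :: _, hq, _, _ => absurd (List.isChain_cons_cons.1 hq).1 id
  | Sum.inl v :: Sum.inr w :: rest, hq, _, hlen => by
    obtain ⟨rfl, hq⟩ := List.isChain_cons_cons.1 hq
    have hrest : ∀ x ∈ rest.head?, x.isLeft := by
      rintro (x | x) hx
      · rfl
      · obtain ⟨rest, rfl⟩ := List.head?_eq_some_iff.1 hx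
        exact absurd (List.isChain_cons_cons.1 hq).1 id
    obtain ⟨p, rfl⟩ := exists_eq_splitPath E hq.tail hrest (by simpa [parity_simps] using hlen)
    exact ⟨v :: p, rfl⟩

lemma map_sublist_zip_tail_splitPath (p : List V) :
    (p.map fun v => (Sum.inl v, Sum.inr v)).Sublist ((splitPath p).zip (splitPath p).tail) := by
  induction p with
  | nil => simp
  | cons v p ih =>
    refine List.Sublist.cons_cons _ ?_
    cases p with
    | nil => simp
    | cons w p => exact List.Sublist.cons _ ih

end SplitPath

lemma List.Nodup.zip_tail {α : Type*} {q : List α} (h : q.Nodup) : (q.zip q.tail).Nodup :=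
  List.Nodup.of_map Prod.snd <| by
    rw [List.map_snd_zip (by simp)]
    exact h.sublist (List.tail_sublist q)

/-- There is a simple path (no repeated nodes) of length `k` from `s` to `t` in `G`
iff there is a trail (no repeated edges) of length `2k+1` from `Head s` to `Tail t`
in the split graph `G'`.  Paths are represented by their lists of nodes. -/
theorem split_graph_simple_path_iff_trail {V : Type*} (E : V → V → Prop) (s t : V) (k : ℕ) :
    (∃ p : List V, List.Chain' E p ∧ p.head? = some s ∧ p.getLast? = some t ∧
        p.length = k + 1 ∧ p.Nodup) ↔
    (∃ q : List (V ⊕ V), List.Chain' (SplitEdge E) q ∧ q.head? = some (Sum.inl s) ∧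
        q.getLast? = some (Sum.inr t) ∧ q.length = (2 * k + 1) + 1 ∧
        (q.zip q.tail).Nodup) := by
  constructor
  · rintro ⟨p, hchain, hhead, hlast, hlen, hnodup⟩
    refine ⟨splitPath p, (isChain_splitPath_iff E p).2 hchain, ?_, ?_, ?_,
      (nodup_splitPath hnodup).zip_tail⟩
    · simp [head?_splitPath, hhead]
    · simp [getLast?_splitPath, hlast]
    · rw [length_splitPath, hlen]; ring
  · rintro ⟨q, hchain, hhead, hlast, hlen, hnodup⟩
    obtain ⟨p, rfl⟩ := exists_eq_splitPath E hchain (by simp [hhead]) ⟨k + 1, by omega⟩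
    rw [head?_splitPath, Option.map_eq_some_iff] at hhead
    rw [getLast?_splitPath, Option.map_eq_some_iff] at hlast
    rw [length_splitPath] at hlen
    exact ⟨p, (isChain_splitPath_iff E p).1 hchain, by simpa using hhead, by simpa using hlast,
      by omega, ((map_sublist_zip_tail_splitPath p).nodup hnodup).of_map _⟩
end

section
/- Let G be a directed graph whose every edge is labeled a, except for a single edge labeled b going from node t₁ to node s₂. Then there exists a simple path from s₁ to t₂ in G whose label word matches the regular expression a*ba* if and only if there exist two node-disjoint simple paths in the a-labeled subgraph, one from s₁ to t₁ and one from s₂ to t₂. -/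
/-!
A simple path matching `a*ba*` must use the unique `b`-edge `(t₁, b, s₂)` exactly once, so
cutting it there leaves an `a`-path from `s₁` to `t₁` and an `a`-path from `s₂` to `t₂`;
their node lists are the two halves of the node list of the whole path, so the whole path is
simple iff both halves are simple and disjoint. Conversely, joining two such disjoint
`a`-paths by the `b`-edge gives a simple path labeled `a*ba*`.
-/

/-- `LabeledPath E s t p` means `p` is a list of labeled edges of `E` forming a
path from `s` to `t` (the empty path exists exactly when `s = t`). -/
def LabeledPath {V A : Type*} (E : Set (V × A × V)) : V → V → List (V × A × V) → Prop
  | s, t, [] => s = t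
  | s, t, e :: p => e ∈ E ∧ e.1 = s ∧ LabeledPath E e.2.2 t p

theorem List.exists_map_eq_replicate_append_cons_replicate_iff {α β : Type*} {f : α → β}
    {l : List α} {a b : β} :
    (∃ m n : ℕ, l.map f = replicate m a ++ b :: replicate n a) ↔
      ∃ l₁ x l₂, l = l₁ ++ x :: l₂ ∧ (∀ y ∈ l₁, f y = a) ∧ f x = b ∧ ∀ y ∈ l₂, f y = a := by
  constructor
  · rintro ⟨m, n, h⟩
    obtain ⟨l₁, l₂', rfl, h₁, h₂'⟩ := map_eq_append_iff.1 h
    obtain ⟨x, l₂, rfl, hx, h₂⟩ := map_eq_cons_iff.1 h₂'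
    exact ⟨l₁, x, l₂, rfl, fun y hy => (eq_replicate_iff.1 h₁).2 _ (mem_map_of_mem hy), hx,
      fun y hy => (eq_replicate_iff.1 h₂).2 _ (mem_map_of_mem hy)⟩
  · rintro ⟨l₁, x, l₂, rfl, h₁, hx, h₂⟩
    exact ⟨l₁.length, l₂.length, by
      simp only [map_append, map_cons, map_eq_replicate_iff.2 h₁, map_eq_replicate_iff.2 h₂, hx]⟩

theorem List.nodup_cons_map_append_cons_iff {α β : Type*} (g : α → β) (s : β)
    (l₁ : List α) (x : α) (l₂ : List α) :
    (s :: (l₁ ++ x :: l₂).map g).Nodup ↔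
      (s :: l₁.map g).Nodup ∧ (g x :: l₂.map g).Nodup ∧
        (s :: l₁.map g).Disjoint (g x :: l₂.map g) := by
  rw [← nodup_append']
  simp

namespace LabeledPath

variable {V A : Type*} {E : Set (V × A × V)}

theorem append_cons_iff :
    ∀ {p : List (V × A × V)} {e : V × A × V} {q : List (V × A × V)} {s t : V},
      LabeledPath E s t (p ++ e :: q) ↔
        LabeledPath E s e.1 p ∧ e ∈ E ∧ LabeledPath E e.2.2 t q
  | [], e, q, s, t => by
    simp only [List.nil_append, LabeledPath, eq_comm (a := s)]
    tauto
  | f :: p, e, q, s, t => by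
    simp only [List.cons_append, LabeledPath, append_cons_iff, and_assoc]

theorem sep_iff {P : V × A × V → Prop} :
    ∀ {p : List (V × A × V)} {s t : V},
      LabeledPath {e ∈ E | P e} s t p ↔ LabeledPath E s t p ∧ ∀ e ∈ p, P e
  | [], s, t => by simp [LabeledPath]
  | e :: p, s, t => by
    simp only [LabeledPath, Set.mem_ofPred_eq, sep_iff, List.forall_mem_cons]
    tauto

end LabeledPath

theorem simple_path_astar_b_astar_iff_two_disjoint_paths_general {V A : Type*}
    (E : Set (V × A × V)) (a b : A)
    (s₁ t₁ s₂ t₂ : V)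
    (hb : (t₁, b, s₂) ∈ E)
    (huniq : ∀ e ∈ E, e.2.1 = b → e = (t₁, b, s₂)) :
    (∃ p, LabeledPath E s₁ t₂ p ∧ (s₁ :: p.map (fun e => e.2.2)).Nodup ∧
        ∃ m n : ℕ, p.map (fun e => e.2.1) =
          List.replicate m a ++ b :: List.replicate n a) ↔
    (∃ p₁ p₂, LabeledPath {e ∈ E | e.2.1 = a} s₁ t₁ p₁ ∧
        (s₁ :: p₁.map (fun e => e.2.2)).Nodup ∧
        LabeledPath {e ∈ E | e.2.1 = a} s₂ t₂ p₂ ∧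
        (s₂ :: p₂.map (fun e => e.2.2)).Nodup ∧
        (s₁ :: p₁.map (fun e => e.2.2)).Disjoint (s₂ :: p₂.map (fun e => e.2.2))) := by
  simp only [LabeledPath.sep_iff]
  constructor
  · rintro ⟨p, hp, hnd, hword⟩
    obtain ⟨p₁, e, p₂, rfl, ha₁, heb, ha₂⟩ :=
      List.exists_map_eq_replicate_append_cons_replicate_iff.1 hword
    obtain ⟨hp₁, heE, hp₂⟩ := LabeledPath.append_cons_iff.1 hp
    obtain rfl := huniq e heE heb
    obtain ⟨hnd₁, hnd₂, hdisj⟩ := (List.nodup_cons_map_append_cons_iff _ _ _ _ _).1 hnd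
    exact ⟨p₁, p₂, ⟨hp₁, ha₁⟩, hnd₁, ⟨hp₂, ha₂⟩, hnd₂, hdisj⟩
  · rintro ⟨p₁, p₂, ⟨hp₁, ha₁⟩, hnd₁, ⟨hp₂, ha₂⟩, hnd₂, hdisj⟩
    exact ⟨p₁ ++ (t₁, b, s₂) :: p₂, LabeledPath.append_cons_iff.2 ⟨hp₁, hb, hp₂⟩,
      (List.nodup_cons_map_append_cons_iff _ _ _ _ _).2 ⟨hnd₁, hnd₂, hdisj⟩,
      List.exists_map_eq_replicate_append_cons_replicate_iff.2 ⟨p₁, _, p₂, rfl, ha₁, rfl, ha₂⟩⟩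

/-- Let every edge of `G` be labeled `a`, except for a single edge `(t₁, b, s₂)`.
Then there is a simple path from `s₁` to `t₂` matching `a*ba*` iff there are two
node-disjoint simple paths in the `a`-labeled subgraph, one from `s₁` to `t₁`
and one from `s₂` to `t₂`. -/
theorem simple_path_astar_b_astar_iff_two_disjoint_paths {V A : Type*}
    (E : Set (V × A × V)) (a b : A) (hab : a ≠ b)
    (s₁ t₁ s₂ t₂ : V) (hdist : [s₁, t₁, s₂, t₂].Nodup)
    (hlabels : ∀ e ∈ E, e.2.1 = a ∨ e.2.1 = b)
    (hb : (t₁, b, s₂) ∈ E)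
    (huniq : ∀ e ∈ E, e.2.1 = b → e = (t₁, b, s₂)) :
    (∃ p, LabeledPath E s₁ t₂ p ∧ (s₁ :: p.map (fun e => e.2.2)).Nodup ∧
        ∃ m n : ℕ, p.map (fun e => e.2.1) =
          List.replicate m a ++ b :: List.replicate n a) ↔
    (∃ p₁ p₂, LabeledPath {e ∈ E | e.2.1 = a} s₁ t₁ p₁ ∧
        (s₁ :: p₁.map (fun e => e.2.2)).Nodup ∧
        LabeledPath {e ∈ E | e.2.1 = a} s₂ t₂ p₂ ∧
        (s₂ :: p₂.map (fun e => e.2.2)).Nodup ∧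
        (s₁ :: p₁.map (fun e => e.2.2)).Disjoint (s₂ :: p₂.map (fun e => e.2.2))) :=
  simple_path_astar_b_astar_iff_two_disjoint_paths_general E a b s₁ t₁ s₂ t₂ hb huniq
end

section
/- Let G = (V, E) be a directed graph, s, t ∈ V, k ∈ ℕ, and suppose P̂ is (k+1)-representative for the family P of node sets of simple paths of length k from s to v (for each v ∈ V). Then G has a simple path from s to t of length at least k if and only if there exists a node v ∈ V and a set X ∈ P̂ (for some v) such that G has a simple path from s to t of length at least k whose first k + 1 nodes are exactly the set X. -/
/-- `S'` is a `q`-representative subfamily of `S`. -/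
def RepFor {V : Type*} [DecidableEq V] (q : ℕ) (S' S : Set (Finset V)) : Prop :=
  S' ⊆ S ∧ ∀ Y : Finset V, Y.card ≤ q →
    (∃ X ∈ S, Disjoint X Y ∧ (X ∪ Y).card ≤ 2 * q) →
    ∃ X' ∈ S', Disjoint X' Y ∧ (X' ∪ Y).card ≤ 2 * q

/-- `P^{k+1}_{sv}`: the family of node sets of simple paths from `s` to `v` of
length `k` (hence with `k + 1` nodes).  Paths are represented by their node lists. -/
def SimplePathSets {V : Type*} [DecidableEq V] (E : V → V → Prop) (s v : V) (k : ℕ) :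
    Set (Finset V) :=
  {X | ∃ p : List V, List.Chain' E p ∧ p.head? = some s ∧ p.getLast? = some v ∧
      p.Nodup ∧ p.length = k + 1 ∧ p.toFinset = X}

/-! Cut a long simple path `p = A ++ T` after its first `k + 1` nodes, at `v`, and let `Y` be the
last (at most `k + 1`) nodes of `T`. Representativity replaces `A` by a path `q` from `s` to `v`
with node set in `P̂_{sv}` and avoiding `Y`. If `q` misses `T`, then `q ++ T` is the required path.
Otherwise let `w` be the last node of `T` on `q`: as `w ∉ Y`, at least `k + 1` nodes of `T` follow
`w`, so following `q` up to `w` and then `T` gives a strictly shorter simple path from `s` to `t`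
that is still long enough, and we conclude by induction on the length. -/

theorem List.exists_split_last {α : Type*} {P : α → Prop} :
    ∀ {l : List α}, (∃ x ∈ l, P x) → ∃ l₁ w l₂, l = l₁ ++ w :: l₂ ∧ P w ∧ ∀ x ∈ l₂, ¬ P x
  | [], ⟨_, hx, _⟩ => absurd hx List.not_mem_nil
  | a :: l, h => by
    by_cases hl : ∃ x ∈ l, P x
    · obtain ⟨l₁, w, l₂, rfl, hw, hl₂⟩ := List.exists_split_last hl
      exact ⟨a :: l₁, w, l₂, rfl, hw, hl₂⟩
    · push Not at hl
      obtain ⟨x, hx, hPx⟩ := h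
      obtain rfl | hx := List.mem_cons.mp hx
      · exact ⟨[], x, l, rfl, hPx, hl⟩
      · exact absurd hPx (hl x hx)

theorem RepFor.exists_disjoint {V : Type*} [DecidableEq V] {q : ℕ} {S' S : Set (Finset V)}
    (h : RepFor q S' S) {X Y : Finset V} (hX : X ∈ S) (hXq : X.card ≤ q) (hYq : Y.card ≤ q)
    (hXY : Disjoint X Y) : ∃ X' ∈ S', Disjoint X' Y :=
  let ⟨X', hX', hX'Y, _⟩ := h.2 Y hYq ⟨X, hX, hXY, (Finset.card_union_le X Y).trans (by omega)⟩
  ⟨X', hX', hX'Y⟩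

section SimplePath

variable {V : Type*} {E : V → V → Prop} {s t v : V}

def IsSimplePath (E : V → V → Prop) (s t : V) (p : List V) : Prop :=
  p.IsChain E ∧ p.head? = some s ∧ p.getLast? = some t ∧ p.Nodup

theorem mem_simplePathSets [DecidableEq V] {k : ℕ} {X : Finset V} :
    X ∈ SimplePathSets E s v k ↔
      ∃ p, IsSimplePath E s v p ∧ p.length = k + 1 ∧ p.toFinset = X := by
  simp only [SimplePathSets, IsSimplePath, Set.mem_ofPred_eq, and_assoc]
  rfl

theorem IsSimplePath.of_append_left {l₁ l₂ : List V} (hp : IsSimplePath E s t (l₁ ++ l₂))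
    (hl₁ : l₁.getLast? = some v) : IsSimplePath E s v l₁ := by
  obtain ⟨hchain, hhead, -, hnodup⟩ := hp
  have hne : l₁ ≠ [] := by rintro rfl; simp at hl₁
  refine ⟨hchain.left_of_append, ?_, hl₁, hnodup.sublist (List.sublist_append_left _ _)⟩
  simpa [List.head?_append, hne] using hhead

theorem IsSimplePath.replace_prefix {l₁ l₁' l₂ : List V} (hp : IsSimplePath E s t (l₁ ++ l₂))
    (hl₁ : l₁.getLast? = some v) (hl₁' : IsSimplePath E s v l₁') (hdisj : l₁'.Disjoint l₂) :
    IsSimplePath E s t (l₁' ++ l₂) := by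
  obtain ⟨hchain, -, hlast, hnodup⟩ := hp
  obtain ⟨hchain', hhead', hlast', hnodup'⟩ := hl₁'
  rw [List.isChain_append, hl₁] at hchain
  rw [List.getLast?_append, hl₁] at hlast
  refine ⟨List.isChain_append.mpr ⟨hchain', hchain.2.1, hlast' ▸ hchain.2.2⟩, ?_, ?_, ?_⟩
  · simp [List.head?_append, hhead']
  · rwa [List.getLast?_append, hlast']
  · exact List.nodup_append'.mpr ⟨hnodup', (List.nodup_append'.mp hnodup).2.1, hdisj⟩

end SimplePath

section RepresentativePrefix

variable {V : Type*} [DecidableEq V] {E : V → V → Prop} {s t : V} {k : ℕ}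
  {Phat : V → Set (Finset V)}

theorem exists_rep_prefix_or_shorter
    (hrep : ∀ v, RepFor (k + 1) (Phat v) (SimplePathSets E s v k)) {p : List V}
    (hp : IsSimplePath E s t p) (hk : k + 1 ≤ p.length) :
    (∃ v, ∃ X ∈ Phat v, ∃ p', IsSimplePath E s t p' ∧ k + 1 ≤ p'.length ∧
        (p'.take (k + 1)).toFinset = X) ∨
      ∃ p', IsSimplePath E s t p' ∧ k + 1 ≤ p'.length ∧ p'.length < p.length := by
  obtain ⟨A, T, rfl, hA⟩ : ∃ A T, p = A ++ T ∧ A.length = k + 1 :=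
    ⟨_, _, (p.take_append_drop (k + 1)).symm, by simp only [List.length_take]; omega⟩
  obtain ⟨v, hv⟩ : ∃ v, A.getLast? = some v :=
    Option.isSome_iff_exists.mp (by simp [← List.length_pos_iff, hA])
  set Y := (T.drop (T.length - (k + 1))).toFinset
  have hY : Y.card ≤ k + 1 :=
    (List.toFinset_card_le _).trans (by simp only [List.length_drop]; omega)
  have hAY : Disjoint A.toFinset Y := by
    refine Finset.disjoint_left.mpr fun x hxA hxY => ?_
    simp only [Y, List.mem_toFinset] at hxA hxY
    exact (List.nodup_append'.mp hp.2.2.2).2.2 hxA (List.mem_of_mem_drop hxY)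
  obtain ⟨X, hX, hXY⟩ := (hrep v).exists_disjoint
    (mem_simplePathSets.mpr ⟨A, hp.of_append_left hv, hA, rfl⟩) (hA ▸ A.toFinset_card_le) hY hAY
  obtain ⟨q, hq, hqk, rfl⟩ := mem_simplePathSets.mp ((hrep v).1 hX)
  by_cases hcol : ∃ w ∈ T, w ∈ q
  · right
    obtain ⟨T₁, w, T₂, rfl, hwq, hT₂⟩ := List.exists_split_last hcol
    obtain ⟨q₁, q₂, rfl⟩ := List.append_of_mem hwq
    have hT₂k : k + 1 ≤ T₂.length := by
      by_contra! h
      -- `Y` contains every suffix of `T` with at most `k + 1` nodes, but `w ∉ Y`.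
      have hsuf : w :: T₂ <:+ (T₁ ++ w :: T₂).drop ((T₁ ++ w :: T₂).length - (k + 1)) :=
        List.suffix_of_suffix_length_le (List.suffix_append _ _) (List.drop_suffix _ _)
          (by simp only [List.length_cons, List.length_append, List.length_drop]; omega)
      exact Finset.disjoint_left.mp hXY (List.mem_toFinset.mpr hwq)
        (List.mem_toFinset.mpr (hsuf.subset List.mem_cons_self))
    have hw : IsSimplePath E s w (q₁ ++ [w]) :=
      (List.append_cons q₁ w q₂ ▸ hq).of_append_left (by simp)
    have hdisj : (q₁ ++ [w]).Disjoint T₂ := fun x hx hx₂ =>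
      hT₂ x hx₂ (by simp only [List.mem_append, List.mem_cons] at hx ⊢; tauto)
    refine ⟨q₁ ++ w :: T₂, ?_, ?_, ?_⟩
    · simpa using (by simpa using hp : IsSimplePath E s t ((A ++ T₁ ++ [w]) ++ T₂)).replace_prefix
        (by simp) hw hdisj
    · simp only [List.length_append, List.length_cons]; omega
    · simp only [List.length_append, List.length_cons] at hqk ⊢; omega
  · left
    refine ⟨v, _, hX, q ++ T, hp.replace_prefix hv hq fun x hx hxT => hcol ⟨x, hxT, hx⟩,
      by simp only [List.length_append]; omega, by rw [List.take_left' hqk]⟩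

theorem exists_rep_prefix_of_isSimplePath
    (hrep : ∀ v, RepFor (k + 1) (Phat v) (SimplePathSets E s v k)) {p : List V}
    (hp : IsSimplePath E s t p) (hk : k + 1 ≤ p.length) :
    ∃ v, ∃ X ∈ Phat v, ∃ p', IsSimplePath E s t p' ∧ k + 1 ≤ p'.length ∧
      (p'.take (k + 1)).toFinset = X := by
  induction hn : p.length using Nat.strong_induction_on generalizing p with
  | _ n ih =>
    obtain h | ⟨p', hp', hk', hlt⟩ := exists_rep_prefix_or_shorter hrep hp hk
    · exact h
    · exact ih _ (hn ▸ hlt) hp' hk' rfl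

end RepresentativePrefix

/-- If `P̂^{k+1}_{sv}` is `(k+1)`-representative for `P^{k+1}_{sv}` for every `v`,
then `G` has a simple path from `s` to `t` of length at least `k` iff there are a
node `v` and a set `X ∈ P̂^{k+1}_{sv}` such that `G` has a simple path from `s` to
`t` of length at least `k` whose first `k + 1` nodes are exactly the set `X`. -/
theorem representative_sets_long_simple_path {V : Type*} [DecidableEq V]
    (E : V → V → Prop) (s t : V) (k : ℕ) (Phat : V → Set (Finset V))
    (hrep : ∀ v : V, RepFor (k + 1) (Phat v) (SimplePathSets E s v k)) :
    (∃ p : List V, List.Chain' E p ∧ p.head? = some s ∧ p.getLast? = some t ∧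
        p.Nodup ∧ k + 1 ≤ p.length) ↔
    (∃ v : V, ∃ X ∈ Phat v, ∃ p : List V, List.Chain' E p ∧ p.head? = some s ∧
        p.getLast? = some t ∧ p.Nodup ∧ k + 1 ≤ p.length ∧
        (p.take (k + 1)).toFinset = X) := by
  constructor
  · rintro ⟨p, hchain, hhead, hlast, hnodup, hk⟩
    obtain ⟨v, X, hX, p', ⟨hchain', hhead', hlast', hnodup'⟩, hk', hpX⟩ :=
      exists_rep_prefix_of_isSimplePath hrep ⟨hchain, hhead, hlast, hnodup⟩ hk
    exact ⟨v, X, hX, p', hchain', hhead', hlast', hnodup', hk', hpX⟩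
  · rintro ⟨-, -, -, p, hchain, hhead, hlast, hnodup, hk, -⟩
    exact ⟨p, hchain, hhead, hlast, hnodup, hk⟩
end

section
/- Let G be an edge-labeled directed graph, let N be an NFA with state set Q and transition relation Δ, and let p be a simple path in the product graph G × N (whose nodes are pairs (u, q)). If the language of N is downward closed, then the projection of p to its G-components (replacing each node (u,q) by u) can be shortened to a simple path in G from the projection of p's first node to the projection of p's last node whose label word is still in L(N). -/
/-- Edges of the product of a labeled graph with an NFA transition relation. -/
def ProdEdge {V Q A : Type*} (E : Set (V × A × V)) (Δ : Set (Q × A × Q)) :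
    Set ((V × Q) × A × (V × Q)) :=
  {e | (e.1.1, e.2.1, e.2.2.1) ∈ E ∧ (e.1.2, e.2.1, e.2.2.2) ∈ Δ}

/-- The NFA accepts the word `w`. -/
def NFAAccepts {Q A : Type*} (Δ : Set (Q × A × Q)) (QI QF : Set Q) (w : List A) : Prop :=
  ∃ qI ∈ QI, ∃ qF ∈ QF, ∃ run : List (Q × A × Q),
    LabeledPath Δ qI qF run ∧ run.map (fun e => e.2.1) = w

/-! Projecting a run of the product to its two coordinates gives a path in `G` and an accepting
run of `N`, both carrying the label word `w` of the run. Cutting every loop out of the path in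
`G` leaves a simple path whose labels form a subword of `w`, and downward closure keeps that
subword in `L(N)`. -/

namespace LabeledPath

variable {V A : Type*} {E : Set (V × A × V)}

theorem exists_suffix_from_mem {p : List (V × A × V)} {s t : V} (hp : LabeledPath E s t p)
    {x : V} (hx : x ∈ s :: p.map (fun e => e.2.2)) :
    ∃ q, q <:+ p ∧ LabeledPath E x t q ∧
      (x :: q.map (fun e => e.2.2)) <:+ (s :: p.map (fun e => e.2.2)) := by
  induction p generalizing s with
  | nil =>
    obtain rfl : x = s := List.mem_singleton.1 hx
    exact ⟨[], List.suffix_refl _, hp, List.suffix_refl _⟩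
  | cons e rest ih =>
    obtain ⟨he, rfl, hrest⟩ := hp
    rcases List.mem_cons.1 hx with rfl | hx
    · exact ⟨e :: rest, List.suffix_refl _, ⟨he, rfl, hrest⟩, List.suffix_refl _⟩
    · obtain ⟨q, hq, hqpath, hqnodes⟩ := ih hrest hx
      exact ⟨q, hq.trans (List.suffix_cons e rest), hqpath,
        hqnodes.trans (List.suffix_cons _ _)⟩

/-- Loop removal: when the start vertex reappears on the simple path from the next vertex,
restart from that occurrence. -/
theorem exists_nodup_sublist {p : List (V × A × V)} {s t : V} (hp : LabeledPath E s t p) :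
    ∃ p', LabeledPath E s t p' ∧ (s :: p'.map (fun e => e.2.2)).Nodup ∧
      (p'.map (fun e => e.2.1)).Sublist (p.map (fun e => e.2.1)) := by
  induction p generalizing s with
  | nil => exact ⟨[], hp, List.nodup_singleton s, List.Sublist.refl _⟩
  | cons e rest ih =>
    obtain ⟨he, rfl, hrest⟩ := hp
    obtain ⟨p'', hp'', hnodup, hsub⟩ := ih hrest
    by_cases hs : e.1 ∈ e.2.2 :: p''.map (fun e => e.2.2)
    · obtain ⟨q, hq, hqpath, hqnodes⟩ := exists_suffix_from_mem hp'' hs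
      exact ⟨q, hqpath, hqnodes.sublist.nodup hnodup,
        (hq.sublist.map _).trans (hsub.trans (List.sublist_cons_self _ _))⟩
    · exact ⟨e :: p'', ⟨he, rfl, hp''⟩, List.nodup_cons.2 ⟨hs, hnodup⟩, hsub.cons_cons _⟩

end LabeledPath

section Product

variable {V Q A : Type*} {E : Set (V × A × V)} {Δ : Set (Q × A × Q)}

theorem LabeledPath.prodEdge_proj {p : List ((V × Q) × A × (V × Q))} {sq tq : V × Q}
    (hp : LabeledPath (ProdEdge E Δ) sq tq p) :
    LabeledPath E sq.1 tq.1 (p.map (fun e => (e.1.1, e.2.1, e.2.2.1))) ∧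
      LabeledPath Δ sq.2 tq.2 (p.map (fun e => (e.1.2, e.2.1, e.2.2.2))) := by
  induction p generalizing sq with
  | nil => subst hp; exact ⟨rfl, rfl⟩
  | cons e rest ih =>
    obtain ⟨⟨heE, heΔ⟩, rfl, hrest⟩ := hp
    obtain ⟨hG, hN⟩ := ih hrest
    exact ⟨⟨heE, rfl, hG⟩, ⟨heΔ, rfl, hN⟩⟩

theorem nfaAccepts_of_prodEdge_path {QI QF : Set Q} {p : List ((V × Q) × A × (V × Q))}
    {s t : V} {q₀ qf : Q} (hq₀ : q₀ ∈ QI) (hqf : qf ∈ QF)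
    (hp : LabeledPath (ProdEdge E Δ) (s, q₀) (t, qf) p) :
    NFAAccepts Δ QI QF (p.map (fun e => e.2.1)) :=
  ⟨q₀, hq₀, qf, hqf, _, hp.prodEdge_proj.2, by simp [Function.comp_def]⟩

end Product

theorem product_projection_shortens_to_simple_path_general {V Q A : Type*}
    (E : Set (V × A × V)) (Δ : Set (Q × A × Q)) (QI QF : Set Q)
    (hdc : ∀ w, NFAAccepts Δ QI QF w → ∀ v : List A, v.Sublist w → NFAAccepts Δ QI QF v)
    (s t : V) (q₀ qf : Q) (hq₀ : q₀ ∈ QI) (hqf : qf ∈ QF)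
    (p : List ((V × Q) × A × (V × Q)))
    (hp : LabeledPath (ProdEdge E Δ) (s, q₀) (t, qf) p) :
    ∃ p' : List (V × A × V), LabeledPath E s t p' ∧
      (s :: p'.map (fun e => e.2.2)).Nodup ∧
      (p'.map (fun e => e.2.1)).Sublist (p.map (fun e => e.2.1)) ∧
      NFAAccepts Δ QI QF (p'.map (fun e => e.2.1)) := by
  obtain ⟨p', hp', hnodup, hsubG⟩ := hp.prodEdge_proj.1.exists_nodup_sublist
  have hsub : (p'.map (fun e => e.2.1)).Sublist (p.map (fun e => e.2.1)) := by
    simpa [Function.comp_def] using hsubG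
  exact ⟨p', hp', hnodup, hsub, hdc _ (nfaAccepts_of_prodEdge_path hq₀ hqf hp) _ hsub⟩

/-- If the language of the NFA is downward closed and `p` is a simple path in the
product graph from `(s, q₀)` (with `q₀` initial) to `(t, q_f)` (with `q_f` final),
then its projection to `G` can be shortened (removing a subsequence of the labels)
to a simple path in `G` from `s` to `t` whose label word is still in `L(N)`. -/
theorem product_projection_shortens_to_simple_path {V Q A : Type*}
    (E : Set (V × A × V)) (Δ : Set (Q × A × Q)) (QI QF : Set Q)
    (hdc : ∀ w, NFAAccepts Δ QI QF w → ∀ v : List A, v.Sublist w → NFAAccepts Δ QI QF v)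
    (s t : V) (q₀ qf : Q) (hq₀ : q₀ ∈ QI) (hqf : qf ∈ QF)
    (p : List ((V × Q) × A × (V × Q)))
    (hp : LabeledPath (ProdEdge E Δ) (s, q₀) (t, qf) p)
    (hsimple : ((s, q₀) :: p.map (fun e => e.2.2)).Nodup) :
    ∃ p' : List (V × A × V), LabeledPath E s t p' ∧
      (s :: p'.map (fun e => e.2.2)).Nodup ∧
      (p'.map (fun e => e.2.1)).Sublist (p.map (fun e => e.2.1)) ∧
      NFAAccepts Δ QI QF (p'.map (fun e => e.2.1)) :=
  product_projection_shortens_to_simple_path_general E Δ QI QF hdc s t q₀ qf hq₀ hqf p hp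
end
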